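/- arXiv:1712.06382 — 5 statements merged into one kernel-verified Lean document; each statement's English description precedes it below -/
import Mathlib

section
/- For a skew-symmetric matrix A of even order 2N and any fixed index i, the Pfaffian admits the Laplace-type expansion Pf(A) = Σ_{j ≠ i} (-1)^{i+j-1+[j<i]} a_{i,j} Pf(A_{î,ĵ}), where A_{î,ĵ} denotes A with rows and columns i and j removed; in particular Pf(A) = Σ_{j=2}^{2N} (-1)^j a_{1,j} Pf(A_{1̂,ĵ}). -/
/-!
Relabelling the indices of a skew-symmetric matrix by a permutation `σ` multiplies the
Pfaffian by `sign σ`. Since adjacent transpositions generate the symmetric group, it suffices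
to treat those: for a transposition fixing `0`, expand along row `0` and apply induction to
the minors; for `(0 1)`, expand twice, so that each term pairs `0` and `1` with two further
indices, and exchanging these two indices reverses the sign of the term. Moving `i` to the
front costs the sign `(-1) ^ i`, and expanding along the new first row gives the theorem.
-/

open Matrix

/-- Pfaffian of an `n × n` matrix, defined recursively by Laplace-type expansion
along the first row (it agrees with the signed sum over perfect matchings;
it is `0` for odd `n` and `1` for `n = 0`). -/
def pf {R : Type*} [CommRing R] : (n : ℕ) → Matrix (Fin n) (Fin n) R → R
  | 0, _ => 1
  | 1, _ => 0
  | n + 2, M => ∑ j : Fin (n + 1), (-1 : R) ^ (j : ℕ) * M 0 j.succ *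
      pf n ((M.submatrix Fin.succ Fin.succ).submatrix j.succAbove j.succAbove)

open Equiv Function

section

variable {R : Type*} [CommRing R]

lemma transpose_submatrix_eq_neg {m n : Type*} {A : Matrix n n R} (hA : Aᵀ = -A) (f : m → n) :
    (A.submatrix f f)ᵀ = -A.submatrix f f := by
  rw [transpose_submatrix, hA]
  rfl

lemma pf_add_two {n : ℕ} (M : Matrix (Fin (n + 2)) (Fin (n + 2)) R) :
    pf (n + 2) M = ∑ j : Fin (n + 1), (-1 : R) ^ (j : ℕ) * M 0 j.succ *
      pf n (M.submatrix (fun k => (j.succAbove k).succ) (fun k => (j.succAbove k).succ)) :=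
  rfl

lemma pf_add_four {n : ℕ} (A : Matrix (Fin (n + 4)) (Fin (n + 4)) R) :
    pf (n + 4) A = A 0 1 * pf (n + 2) (A.submatrix (fun k => k.succ.succ) (fun k => k.succ.succ)) -
      ∑ q : Fin (n + 2) × Fin (n + 1), (-1 : R) ^ ((q.1 : ℕ) + q.2) * A 0 q.1.succ.succ *
        A 1 (q.1.succAbove q.2).succ.succ *
        pf n (A.submatrix (fun k => (q.1.succAbove (q.2.succAbove k)).succ.succ)
          (fun k => (q.1.succAbove (q.2.succAbove k)).succ.succ)) := by
  rw [pf_add_two, Fin.sum_univ_succ, Fintype.sum_prod_type, sub_eq_add_neg,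
    ← Finset.sum_neg_distrib]
  congr 1
  · simp
  refine Finset.sum_congr rfl fun p _ => ?_
  rw [pf_add_two, Finset.mul_sum, ← Finset.sum_neg_distrib]
  refine Finset.sum_congr rfl fun x _ => ?_
  simp only [submatrix_apply, submatrix_submatrix, comp_def, Fin.succ_succAbove_zero,
    Fin.succ_zero_eq_one, Fin.succ_succAbove_succ, Fin.val_succ, pow_add, pow_one]
  ring

lemma neg_one_pow_succAbove_add_predAbove {n : ℕ} (p : Fin (n + 2)) (x : Fin (n + 1)) :
    (-1 : R) ^ ((p.succAbove x : ℕ) + x.predAbove p) = -(-1) ^ ((p : ℕ) + x) := by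
  rcases lt_or_ge x.castSucc p with h | h
  · rw [Fin.succAbove_of_castSucc_lt _ _ h, Fin.predAbove_of_castSucc_lt _ _ h]
    obtain ⟨p, rfl⟩ := Fin.exists_succ_eq.2 (Fin.ne_zero_of_lt h)
    simp only [Fin.val_castSucc, Fin.pred_succ, Fin.val_succ]
    ring
  · rw [Fin.succAbove_of_le_castSucc _ _ h, Fin.predAbove_of_le_castSucc _ _ h]
    simp only [Fin.val_succ, Fin.coe_castPred]
    ring

/-- A pair `(p, x)` encodes the two distinct holes `p` and `p.succAbove x`; this exchanges them. -/
def Fin.swapHoles (n : ℕ) : Perm (Fin (n + 2) × Fin (n + 1)) :=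
  Involutive.toPerm (fun q => (q.1.succAbove q.2, q.2.predAbove q.1)) fun q =>
    Prod.ext (Fin.succAbove_succAbove_predAbove q.1 q.2) (Fin.predAbove_predAbove_succAbove q.1 q.2)

lemma Fin.swapHoles_apply {n : ℕ} (q : Fin (n + 2) × Fin (n + 1)) :
    Fin.swapHoles n q = (q.1.succAbove q.2, q.2.predAbove q.1) :=
  rfl

lemma pf_submatrix_swap_zero_one_add_four {n : ℕ} {A : Matrix (Fin (n + 4)) (Fin (n + 4)) R}
    (hA : Aᵀ = -A) : pf (n + 4) (A.submatrix (swap 0 1) (swap 0 1)) = -pf (n + 4) A := by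
  have hfix : ∀ k : Fin (n + 2), swap (0 : Fin (n + 4)) 1 k.succ.succ = k.succ.succ := fun k =>
    swap_apply_of_ne_of_ne (Fin.succ_ne_zero _) (Fin.succ_injective _ |>.ne (Fin.succ_ne_zero k))
  have h10 : A 1 0 = -A 0 1 := by simpa using congrFun (congrFun hA 0) 1
  have hsum : ∑ q : Fin (n + 2) × Fin (n + 1), (-1 : R) ^ ((q.1 : ℕ) + q.2) * A 1 q.1.succ.succ *
        A 0 (q.1.succAbove q.2).succ.succ *
        pf n (A.submatrix (fun k => (q.1.succAbove (q.2.succAbove k)).succ.succ)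
          (fun k => (q.1.succAbove (q.2.succAbove k)).succ.succ)) =
      -∑ q : Fin (n + 2) × Fin (n + 1), (-1 : R) ^ ((q.1 : ℕ) + q.2) * A 0 q.1.succ.succ *
        A 1 (q.1.succAbove q.2).succ.succ *
        pf n (A.submatrix (fun k => (q.1.succAbove (q.2.succAbove k)).succ.succ)
          (fun k => (q.1.succAbove (q.2.succAbove k)).succ.succ)) := by
    rw [← Equiv.sum_comp (Fin.swapHoles n), ← Finset.sum_neg_distrib]
    refine Finset.sum_congr rfl fun q _ => ?_
    simp only [Fin.swapHoles_apply, neg_one_pow_succAbove_add_predAbove,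
      Fin.succAbove_succAbove_predAbove, Fin.succAbove_succAbove_succAbove_predAbove]
    ring
  rw [pf_add_four, pf_add_four]
  simp only [submatrix_apply, submatrix_submatrix, comp_def, swap_apply_left, swap_apply_right,
    hfix, h10, hsum]
  ring

lemma pf_submatrix_swap_zero_one {n : ℕ} {A : Matrix (Fin (n + 2)) (Fin (n + 2)) R}
    (hA : Aᵀ = -A) : pf (n + 2) (A.submatrix (swap 0 1) (swap 0 1)) = -pf (n + 2) A := by
  rcases n with _ | _ | n
  · have h10 : A 1 0 = -A 0 1 := by simpa using congrFun (congrFun hA 0) 1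
    simp [pf, h10]
  · simp [pf]
  · exact pf_submatrix_swap_zero_one_add_four hA

lemma Fin.swap_castSucc_succ_succAbove_castSucc {n : ℕ} (e k : Fin n) :
    swap e.castSucc e.succ (e.castSucc.succAbove k) = e.succ.succAbove k := by
  simp only [Fin.ext_iff, swap_apply_def, Fin.succAbove, Fin.lt_def]
  split_ifs <;> simp_all <;> omega

lemma pf_submatrix_swap_succ_succ {n : ℕ}
    (ih : ∀ B : Matrix (Fin (n + 1)) (Fin (n + 1)) R, Bᵀ = -B → ∀ a b, a ≠ b →
      pf (n + 1) (B.submatrix (swap a b) (swap a b)) = -pf (n + 1) B)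
    {A : Matrix (Fin (n + 3)) (Fin (n + 3)) R} (hA : Aᵀ = -A) (e : Fin (n + 1)) :
    pf (n + 3) (A.submatrix (swap e.succ.castSucc e.succ.succ) (swap e.succ.castSucc e.succ.succ)) =
      -pf (n + 3) A := by
  rw [Fin.castSucc_succ]
  set σ := swap e.castSucc e.succ
  have hσ : ∀ k, σ (e.castSucc.succAbove k) = e.succ.succAbove k :=
    Fin.swap_castSucc_succ_succAbove_castSucc e
  have h0 : swap e.castSucc.succ e.succ.succ 0 = 0 :=
    swap_apply_of_ne_of_ne (Fin.succ_ne_zero _).symm (Fin.succ_ne_zero _).symm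
  have hsucc : ∀ k, swap e.castSucc.succ e.succ.succ k.succ = (σ k).succ :=
    Fin.succ_injective _ |>.swap_apply _ _
  rw [pf_add_two, pf_add_two, ← Finset.sum_neg_distrib]
  refine Fintype.sum_equiv σ _ _ fun j => ?_
  simp only [submatrix_apply, submatrix_submatrix, comp_def, h0, hsucc]
  rcases eq_or_ne j e.castSucc with rfl | hjc
  · simp only [hσ, σ, swap_apply_left, Fin.val_succ, Fin.val_castSucc, pow_succ]
    ring
  rcases eq_or_ne j e.succ with rfl | hjd
  · have hσ' : ∀ k, σ (e.succ.succAbove k) = e.castSucc.succAbove k := fun k => by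
      rw [← hσ, swap_apply_self]
    simp only [hσ', σ, swap_apply_right, Fin.val_succ, Fin.val_castSucc, pow_succ]
    ring
  obtain ⟨c, hc⟩ := Fin.exists_succAbove_eq hjc.symm
  obtain ⟨d, hd⟩ := Fin.exists_succAbove_eq hjd.symm
  have hcd : c ≠ d := by
    rintro rfl
    exact (Fin.castSucc_lt_succ (i := e)).ne (hc.symm.trans hd)
  have hσj : ∀ k, σ (j.succAbove k) = j.succAbove (swap c d k) := fun k => by
    rw [← Fin.succAbove_right_injective.swap_apply, hc, hd]
  have hpf := ih _ (transpose_submatrix_eq_neg hA fun k => (j.succAbove k).succ) c d hcd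
  simp only [submatrix_submatrix, comp_def] at hpf
  simp only [hσj, hpf, σ, swap_apply_of_ne_of_ne hjc hjd]
  ring

theorem pf_submatrix_perm {n : ℕ} (σ : Perm (Fin n)) {A : Matrix (Fin n) (Fin n) R}
    (hA : Aᵀ = -A) : pf n (A.submatrix σ σ) = (Perm.sign σ : ℤ) * pf n A := by
  induction n using Nat.strong_induction_on with
  | _ n ih =>
  rcases n with _ | m
  · simp [Subsingleton.elim σ 1]
  have hswap : ∀ i : Fin m, ∀ {A : Matrix (Fin (m + 1)) (Fin (m + 1)) R}, Aᵀ = -A →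
      pf (m + 1) (A.submatrix (swap i.castSucc i.succ) (swap i.castSucc i.succ)) =
        -pf (m + 1) A := by
    intro i A hA
    rcases m with _ | m
    · exact i.elim0
    cases i using Fin.cases with
    | zero => exact pf_submatrix_swap_zero_one hA
    | succ e =>
      rcases m with _ | m
      · exact e.elim0
      refine pf_submatrix_swap_succ_succ (fun B hB a b hab => ?_) hA e
      rw [ih (m + 1) (by omega) _ hB, Perm.sign_swap hab]
      simp
  have hσ : σ ∈ Submonoid.closure (Set.range fun i : Fin m => swap i.castSucc i.succ) :=
    Perm.mclosure_swap_castSucc_succ m ▸ Submonoid.mem_top σ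
  induction hσ using Submonoid.closure_induction generalizing A with
  | mem _ h =>
    obtain ⟨i, rfl⟩ := h
    rw [hswap i hA, Perm.sign_swap (Fin.castSucc_lt_succ (i := i)).ne]
    simp
  | one => simp
  | mul x y _ _ hx hy =>
    rw [Perm.coe_mul, ← submatrix_submatrix, hy (transpose_submatrix_eq_neg hA x), hx hA,
      Perm.sign_mul]
    push_cast
    ring

lemma Fin.val_succAbove_add_ite_lt {n : ℕ} (i : Fin (n + 1)) (j : Fin n) :
    (i.succAbove j : ℕ) + (if i.succAbove j < i then 1 else 0) = j + 1 := by
  rcases lt_or_ge j.castSucc i with h | h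
  · rw [Fin.succAbove_of_castSucc_lt _ _ h, if_pos h]
    rfl
  · rw [Fin.succAbove_of_le_castSucc _ _ h, if_neg (h.trans Fin.castSucc_lt_succ.le).not_gt]
    rfl

end

/-- For `j ≠ i`, the index `j` is parametrized as `j = i.succAbove j'`, and
`A_{î,ĵ}` is the submatrix obtained by deleting rows and columns `i` and `j`
(realized by the order embedding `k ↦ i.succAbove (j'.succAbove k)`).
Signs are written for the 1-based indices `i+1`, `j+1` of the paper. -/
theorem pf_laplace_expansion_general {R : Type*} [CommRing R] (N : ℕ)
    (A : Matrix (Fin (2 * N + 2)) (Fin (2 * N + 2)) R)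
    (hA : Aᵀ = -A) (i : Fin (2 * N + 2)) :
    (pf (2 * N + 2) A = ∑ j' : Fin (2 * N + 1),
        (-1 : R) ^ ((i : ℕ) + ((i.succAbove j' : Fin (2 * N + 2)) : ℕ) + 1 +
            (if i.succAbove j' < i then 1 else 0)) *
          A i (i.succAbove j') *
          pf (2 * N) (A.submatrix (fun k => i.succAbove (j'.succAbove k))
            (fun k => i.succAbove (j'.succAbove k))))
    ∧ (pf (2 * N + 2) A = ∑ j' : Fin (2 * N + 1),
        (-1 : R) ^ (j' : ℕ) * A 0 j'.succ *
          pf (2 * N) (A.submatrix (fun k => Fin.succ (j'.succAbove k))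
            (fun k => Fin.succ (j'.succAbove k)))) := by
  refine ⟨?_, pf_add_two A⟩
  have hcycle := pf_submatrix_perm i.cycleRange.symm hA
  rw [Perm.sign_symm, Fin.sign_cycleRange, pf_add_two] at hcycle
  simp only [submatrix_apply, submatrix_submatrix, comp_def, Fin.cycleRange_symm_zero,
    Fin.cycleRange_symm_succ] at hcycle
  push_cast at hcycle
  have hpf : pf (2 * N + 2) A = (-1 : R) ^ (i : ℕ) * ∑ j : Fin (2 * N + 1),
      (-1 : R) ^ (j : ℕ) * A i (i.succAbove j) *
        pf (2 * N) (A.submatrix (fun k => i.succAbove (j.succAbove k))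
          (fun k => i.succAbove (j.succAbove k))) := by
    rw [hcycle, ← mul_assoc, ← pow_add, ← two_mul, pow_mul]
    simp
  rw [hpf, Finset.mul_sum]
  refine Finset.sum_congr rfl fun j _ => ?_
  rw [add_assoc _ 1, add_comm 1, ← add_assoc, add_assoc (i : ℕ), Fin.val_succAbove_add_ite_lt]
  ring

/-- the Laplace-type expansion of the Pfaffian along a fixed
row/column index `i`; in particular, the expansion along the first index.
For `j ≠ i`, the index `j` is parametrized as `j = i.succAbove j'`, and
`A_{î,ĵ}` is the submatrix obtained by deleting rows and columns `i` and `j`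
(realized by the order embedding `k ↦ i.succAbove (j'.succAbove k)`).
Signs are written for the 1-based indices `i+1`, `j+1` of the paper. -/
theorem pf_laplace_expansion {R : Type*} [CommRing R] (N : ℕ)
    (A : Matrix (Fin (2 * N + 2)) (Fin (2 * N + 2)) R)
    (hA : Aᵀ = -A) (hdiag : ∀ i, A i i = 0) (i : Fin (2 * N + 2)) :
    (pf (2 * N + 2) A = ∑ j' : Fin (2 * N + 1),
        (-1 : R) ^ ((i : ℕ) + ((i.succAbove j' : Fin (2 * N + 2)) : ℕ) + 1 +
            (if i.succAbove j' < i then 1 else 0)) *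
          A i (i.succAbove j') *
          pf (2 * N) (A.submatrix (fun k => i.succAbove (j'.succAbove k))
            (fun k => i.succAbove (j'.succAbove k))))
    ∧ (pf (2 * N + 2) A = ∑ j' : Fin (2 * N + 1),
        (-1 : R) ^ (j' : ℕ) * A 0 j'.succ *
          pf (2 * N) (A.submatrix (fun k => Fin.succ (j'.succAbove k))
            (fun k => Fin.succ (j'.succAbove k)))) :=
  pf_laplace_expansion_general N A hA i
end

section
/- (Schur's Pfaffian identity, even case) For variables s_1, ..., s_{2N} with all s_i + s_j invertible, the Pfaffian of the skew-symmetric matrix with (i,j)-entry (s_i - s_j)/(s_i + s_j) equals ∏_{1 ≤ i < j ≤ 2N} (s_i - s_j)/(s_i + s_j). -/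
open Matrix

/-!
Expanding `pf` along the first row and applying the identity to the `2N - 2` remaining
variables, the claim for pairwise distinct variables `z, y₁, …, y_{2N-1}` reduces to
`∑ⱼ (z - yⱼ)/(z + yⱼ) ∏_{i ≠ j} (yⱼ + yᵢ)/(yⱼ - yᵢ) = ∏ⱼ (z - yⱼ)/(z + yⱼ)`,
which is the partial fraction expansion of `t ↦ ∏ⱼ (t - yⱼ)/(t + yⱼ)` evaluated at `t = z` and
at `t = 0` (the number of `yⱼ` is odd). Coincident variables are reached by specialising the
identity for the generic variables `Xᵢ` in the localisation of `ℤ[X₁, …, X_{2N}]` away from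
`∏ (Xᵢ + Xⱼ)`, a domain in which the `Xᵢ` are distinct.
-/

open Finset
open scoped Ring

section PartialFractions

variable {F ι : Type*} [Field F] [Fintype ι] [DecidableEq ι] {y : ι → F}

theorem prod_sub_div_add_eq_one_sub_sum (hy : Function.Injective y) {z : F}
    (hz : ∀ j, z + y j ≠ 0) :
    ∏ j, (z - y j) / (z + y j) =
      1 - ∑ j, 2 * y j / (z + y j) * ∏ i ∈ univ.erase j, (y j + y i) / (y j - y i) := by
  set v : ι → F := fun j => -y j
  have hv : Set.InjOn v (univ : Finset ι) := (neg_injective.comp hy).injOn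
  -- `∏ (X - yⱼ) - ∏ (X + yⱼ)` has degree `< #ι`, so it is its own interpolant at the nodes `-yⱼ`
  set P := Lagrange.nodal univ y - Lagrange.nodal univ v
  have hP : P.degree < #(univ : Finset ι) := by
    rw [← Lagrange.degree_nodal (s := univ) (v := y)]
    refine Polynomial.degree_sub_lt_left ?_ Lagrange.nodal_ne_zero ?_
    · rw [Lagrange.degree_nodal, Lagrange.degree_nodal]
    · rw [Lagrange.nodal_monic.leadingCoeff, Lagrange.nodal_monic.leadingCoeff]
  have hzv : ∀ j, z - v j = z + y j := fun j => sub_neg_eq_add z (y j)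
  have key := congrArg (Polynomial.eval z) (Lagrange.eq_interpolate hv hP)
  rw [Lagrange.eval_interpolate_not_at_node _ fun j _ => sub_ne_zero.mp (hzv j ▸ hz j)] at key
  simp only [P, Polynomial.eval_sub, Lagrange.eval_nodal, Lagrange.eval_nodal_at_node (mem_univ _),
    sub_zero, hzv] at key
  have hterm : ∀ j, Lagrange.nodalWeight univ v j * ∏ i, (v j - y i) =
      -(2 * y j) * ∏ i ∈ univ.erase j, (y j + y i) / (y j - y i) := by
    intro j
    rw [Lagrange.nodalWeight, ← mul_prod_erase univ _ (mem_univ j), mul_left_comm,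
      ← prod_mul_distrib]
    congr 1
    · ring
    · refine prod_congr rfl fun i _ => ?_
      rw [show v j - v i = -(y j - y i) by ring, show v j - y i = -(y j + y i) by ring, inv_neg,
        neg_mul_neg, div_eq_inv_mul]
  have hsum : ∑ j, Lagrange.nodalWeight univ v j * (z + y j)⁻¹ * ∏ i, (v j - y i) =
      -∑ j, 2 * y j / (z + y j) * ∏ i ∈ univ.erase j, (y j + y i) / (y j - y i) := by
    rw [← sum_neg_distrib]
    refine sum_congr rfl fun j _ => ?_
    rw [mul_right_comm, hterm]
    ring
  rw [hsum] at key
  rw [prod_div_distrib, div_eq_iff (prod_ne_zero_iff.mpr fun j _ => hz j)]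
  linear_combination key

theorem sum_prod_add_div_sub_eq_one (hι : Odd (Fintype.card ι)) (hy : Function.Injective y)
    (hy2 : ∀ j, y j + y j ≠ 0) :
    ∑ j, ∏ i ∈ univ.erase j, (y j + y i) / (y j - y i) = 1 := by
  obtain ⟨j₀⟩ : Nonempty ι := Fintype.card_pos_iff.mp hι.pos
  have h2 : (2 : F) ≠ 0 := left_ne_zero_of_mul (two_mul (y j₀) ▸ hy2 j₀)
  have hy0 : ∀ j, y j ≠ 0 := fun j => right_ne_zero_of_mul (two_mul (y j) ▸ hy2 j)
  have key := prod_sub_div_add_eq_one_sub_sum hy (z := 0) fun j => by simpa using hy0 j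
  simp only [zero_sub, zero_add, neg_div, div_self (hy0 _), prod_const, card_univ,
    hι.neg_one_pow] at key
  simp only [mul_div_assoc, div_self (hy0 _), mul_one, ← mul_sum] at key
  apply mul_left_cancel₀ h2
  linear_combination key

theorem sum_sub_div_add_mul_prod_eq_prod (hι : Odd (Fintype.card ι)) (hy : Function.Injective y)
    (hy2 : ∀ j, y j + y j ≠ 0) {z : F} (hz : ∀ j, z + y j ≠ 0) :
    ∑ j, (z - y j) / (z + y j) * ∏ i ∈ univ.erase j, (y j + y i) / (y j - y i) =
      ∏ j, (z - y j) / (z + y j) := by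
  rw [prod_sub_div_add_eq_one_sub_sum hy hz, ← sum_prod_add_div_sub_eq_one hι hy hy2,
    ← sum_sub_distrib]
  refine sum_congr rfl fun j _ => ?_
  field_simp [hz j]
  ring

end PartialFractions

section FinProd

variable {M : Type*} [CommMonoid M] {n : ℕ}

theorem Fin.prod_univ_erase_eq_prod_succAbove (f : Fin (n + 1) → M) (j : Fin (n + 1)) :
    ∏ i ∈ univ.erase j, f i = ∏ i, f (j.succAbove i) := by
  rw [← sdiff_singleton_eq_erase, ← compl_eq_univ_sdiff, ← Fin.image_succAbove_univ,
    prod_image fun _ _ _ _ h => Fin.succAbove_right_injective h]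

theorem Fin.prod_ite_succAbove_lt (j : Fin (n + 1)) (r : M) :
    ∏ i : Fin n, (if j.succAbove i < j then r else 1) = r ^ (j : ℕ) := by
  rw [prod_ite, Finset.prod_const, prod_const_one, mul_one]
  congr 1
  simp_rw [Fin.succAbove_lt_iff_castSucc_lt, Fin.lt_def, Fin.val_castSucc]
  exact Fin.card_filter_val_lt.trans (min_eq_right (Nat.lt_succ_iff.mp j.isLt))

end FinProd

theorem map_ringInverse {M₀ N₀ F : Type*} [MonoidWithZero M₀] [MonoidWithZero N₀]
    [FunLike F M₀ N₀] [MonoidHomClass F M₀ N₀] (f : F) {x : M₀} (hx : IsUnit x) :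
    f x⁻¹ʳ = (f x)⁻¹ʳ := by
  have h : f x⁻¹ʳ * f x = 1 := by rw [← map_mul, Ring.inverse_mul_cancel x hx, map_one]
  rw [← mul_one (f x⁻¹ʳ), ← Ring.mul_inverse_cancel _ (hx.map f), ← mul_assoc, h, one_mul]

theorem map_pf {R S : Type*} [CommRing R] [CommRing S] (f : R →+* S) :
    ∀ (n : ℕ) (M : Matrix (Fin n) (Fin n) R), f (pf n M) = pf n (M.map f)
  | 0, _ => by simp [pf]
  | 1, _ => by simp [pf]
  | n + 2, M => by
    simp only [pf, map_sum, map_mul, map_pow, map_neg, map_one, map_pf f n]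
    rfl

section AboveDiag

variable {R S : Type*} {n : ℕ}

def prodAboveDiag [CommMonoid R] (M : Matrix (Fin n) (Fin n) R) : R :=
  ∏ i, ∏ j, if i < j then M i j else 1

theorem map_prodAboveDiag [CommMonoid R] [CommMonoid S] {F : Type*} [FunLike F R S]
    [MonoidHomClass F R S] (f : F) (M : Matrix (Fin n) (Fin n) R) :
    f (prodAboveDiag M) = prodAboveDiag (M.map f) := by
  simp only [prodAboveDiag, map_prod, apply_ite f, map_one, Matrix.map_apply]

theorem prodAboveDiag_eq_mul_submatrix_succAbove [CommRing R]
    (M : Matrix (Fin (n + 1)) (Fin (n + 1)) R) (hM : ∀ i j, M j i = -M i j) (j : Fin (n + 1)) :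
    prodAboveDiag M = (-1) ^ (j : ℕ) * (∏ i, M j (j.succAbove i)) *
      prodAboveDiag (M.submatrix j.succAbove j.succAbove) := by
  simp only [prodAboveDiag, Fin.prod_univ_succAbove _ j, lt_irrefl, if_false, one_mul,
    Fin.succAbove_lt_succAbove_iff, prod_mul_distrib, submatrix_apply]
  have hpair : ∀ i, (if j < j.succAbove i then M j (j.succAbove i) else 1) *
      (if j.succAbove i < j then M (j.succAbove i) j else 1) =
      (if j.succAbove i < j then -1 else 1) * M j (j.succAbove i) := fun i => by
    rcases (Fin.succAbove_ne j i).lt_or_gt with h | h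
    · rw [if_neg h.not_gt, if_pos h, if_pos h, hM j, one_mul, neg_one_mul]
    · rw [if_pos h, if_neg h.not_gt, if_neg h.not_gt, one_mul, mul_one]
  rw [← Fin.prod_ite_succAbove_lt j (-1 : R)]
  simp only [← prod_mul_distrib]
  refine prod_congr rfl fun i _ => ?_
  rw [← hpair i]
  ring

end AboveDiag

section Schur

variable {R S : Type*} [CommRing R] [CommRing S] {n : ℕ}

noncomputable def schurMatrix (s : Fin n → R) : Matrix (Fin n) (Fin n) R :=
  of fun i j => (s i - s j) * (s i + s j)⁻¹ʳ

theorem schurMatrix_apply (s : Fin n → R) (i j : Fin n) :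
    schurMatrix s i j = (s i - s j) * (s i + s j)⁻¹ʳ := rfl

theorem schurMatrix_submatrix {m : ℕ} (s : Fin n → R) (e : Fin m → Fin n) :
    (schurMatrix s).submatrix e e = schurMatrix (s ∘ e) := rfl

theorem schurMatrix_skew (s : Fin n → R) (i j : Fin n) :
    schurMatrix s j i = -schurMatrix s i j := by
  rw [schurMatrix_apply, schurMatrix_apply, add_comm, ← neg_sub, neg_mul]

theorem map_schurMatrix (f : R →+* S) {s : Fin n → R} (hs : ∀ i j, IsUnit (s i + s j)) :
    (schurMatrix s).map f = schurMatrix (f ∘ s) := by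
  ext i j
  simp [schurMatrix_apply, map_ringInverse f (hs i j)]

end Schur

section Field

variable {K : Type*} [Field K] {n : ℕ}

theorem prodAboveDiag_schurMatrix_comp_succAbove {y : Fin (n + 1) → K}
    (hy : Function.Injective y) (hs : ∀ i j, y i + y j ≠ 0) (j : Fin (n + 1)) :
    prodAboveDiag (schurMatrix (y ∘ j.succAbove)) =
      (-1) ^ (j : ℕ) * (∏ i ∈ univ.erase j, (y j + y i) / (y j - y i)) *
        prodAboveDiag (schurMatrix y) := by
  rw [prodAboveDiag_eq_mul_submatrix_succAbove (schurMatrix y) (schurMatrix_skew y) j,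
    schurMatrix_submatrix, Fin.prod_univ_erase_eq_prod_succAbove]
  have hinv : (∏ i, (y j + y (j.succAbove i)) / (y j - y (j.succAbove i))) *
      ∏ i, schurMatrix y j (j.succAbove i) = 1 := by
    rw [← prod_mul_distrib]
    refine prod_eq_one fun i _ => ?_
    have hne : y j - y (j.succAbove i) ≠ 0 := sub_ne_zero.mpr (hy.ne (Fin.succAbove_ne j i).symm)
    rw [schurMatrix_apply, Ring.inverse_eq_inv]
    field_simp [hne, hs j (j.succAbove i)]
  have hsq : (-1 : K) ^ (j : ℕ) * (-1) ^ (j : ℕ) = 1 := pow_mul_pow_eq_one _ (by norm_num)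
  linear_combination (-((-1) ^ (j : ℕ) * (-1) ^ (j : ℕ) *
    prodAboveDiag (schurMatrix (y ∘ j.succAbove)))) * hinv -
      prodAboveDiag (schurMatrix (y ∘ j.succAbove)) * hsq

theorem pf_schurMatrix_of_injective :
    ∀ {n : ℕ}, Even n → ∀ s : Fin n → K, (∀ i j, s i + s j ≠ 0) → Function.Injective s →
      pf n (schurMatrix s) = prodAboveDiag (schurMatrix s)
  | 0, _, _, _, _ => by simp [pf, prodAboveDiag]
  | 1, h, _, _, _ => absurd h Nat.not_even_one
  | n + 2, hn, s, hs, hinj => by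
    have hn' : Even n := by simpa [Nat.even_add] using hn
    have hy : Function.Injective (s ∘ Fin.succ) := hinj.comp (Fin.succ_injective _)
    have ih (j : Fin (n + 1)) : pf n (schurMatrix ((s ∘ Fin.succ) ∘ j.succAbove)) =
        prodAboveDiag (schurMatrix ((s ∘ Fin.succ) ∘ j.succAbove)) :=
      pf_schurMatrix_of_injective hn' _ (fun _ _ => hs _ _)
        (hy.comp Fin.succAbove_right_injective)
    rw [pf, prodAboveDiag_eq_mul_submatrix_succAbove _ (schurMatrix_skew s) 0]
    simp only [schurMatrix_submatrix, Fin.succAbove_zero, ih,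
      prodAboveDiag_schurMatrix_comp_succAbove hy (fun _ _ => hs _ _), Fin.val_zero, pow_zero,
      one_mul, schurMatrix_apply, Ring.inverse_eq_inv, ← div_eq_mul_inv, Function.comp_apply]
    have hodd : Odd (Fintype.card (Fin (n + 1))) := by
      rw [Fintype.card_fin]
      exact hn'.add_one
    rw [← sum_sub_div_add_mul_prod_eq_prod (y := fun i : Fin (n + 1) => s i.succ) hodd hy
      (fun _ => hs _ _) (fun _ => hs _ _), sum_mul]
    refine sum_congr rfl fun j _ => ?_
    rw [← mul_assoc, mul_mul_mul_comm, pow_mul_pow_eq_one _ (by norm_num), one_mul]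

end Field

theorem pf_schurMatrix_of_isDomain {R : Type*} [CommRing R] [IsDomain R] {n : ℕ} (hn : Even n)
    {s : Fin n → R} (hs : ∀ i j, IsUnit (s i + s j)) (hinj : Function.Injective s) :
    pf n (schurMatrix s) = prodAboveDiag (schurMatrix s) := by
  let ι := algebraMap R (FractionRing R)
  apply IsFractionRing.injective R (FractionRing R)
  rw [map_pf, map_prodAboveDiag, map_schurMatrix ι hs]
  refine pf_schurMatrix_of_injective hn _ (fun i j => ?_)
    ((IsFractionRing.injective R _).comp hinj)
  simpa only [Function.comp_apply, map_add] using ((hs i j).map ι).ne_zero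

open MvPolynomial in
theorem pf_schurMatrix {R : Type*} [CommRing R] {n : ℕ} (hn : Even n) (s : Fin n → R)
    (hs : ∀ i j, IsUnit (s i + s j)) : pf n (schurMatrix s) = prodAboveDiag (schurMatrix s) := by
  let d : MvPolynomial (Fin n) ℤ := ∏ i : Fin n, ∏ j : Fin n, (X i + X j)
  have hX (i j : Fin n) : (X i + X j : MvPolynomial (Fin n) ℤ) ≠ 0 := fun h => by
    simpa using congrArg (eval fun _ => (1 : ℤ)) h
  have hd : Submonoid.powers d ≤ nonZeroDivisors _ :=
    powers_le_nonZeroDivisors_of_noZeroDivisors (prod_ne_zero_iff.mpr fun i _ =>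
      prod_ne_zero_iff.mpr fun j _ => hX i j)
  let L := Localization.Away d
  have : IsDomain L := IsLocalization.isDomain_localization hd
  let x : Fin n → L := fun i => algebraMap (MvPolynomial (Fin n) ℤ) L (X i)
  have hx (i j : Fin n) : IsUnit (x i + x j) := by
    have hdvd : X i + X j ∣ d := (dvd_prod_of_mem (fun j => X i + X j) (mem_univ j)).trans
      (dvd_prod_of_mem (fun i => ∏ j : Fin n, (X i + X j)) (mem_univ i))
    simpa only [x, map_add] using IsLocalization.Away.isUnit_of_dvd d (S := L) hdvd
  have hL := pf_schurMatrix_of_isDomain hn hx ((IsLocalization.injective L hd).comp X_injective)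
  let φ : L →+* R := IsLocalization.Away.lift d (g := (aeval s).toRingHom) (by simpa [d] using hs)
  have hφ : φ ∘ x = s := funext fun i => by simp [φ, x, IsLocalization.Away.lift_eq]
  have := congrArg φ hL
  rwa [map_pf, map_prodAboveDiag, map_schurMatrix φ hx, hφ] at this

/-- Schur's Pfaffian identity, even case: the Pfaffian of the
skew-symmetric matrix with entries `(sᵢ - sⱼ)/(sᵢ + sⱼ)` equals
`∏_{i<j} (sᵢ - sⱼ)/(sᵢ + sⱼ)`. -/
theorem schur_pfaffian_even {K : Type*} [Field K] (N : ℕ)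
    (s : Fin (2 * N) → K) (hs : ∀ i j, s i + s j ≠ 0) :
    pf (2 * N) (Matrix.of fun i j => (s i - s j) / (s i + s j))
      = ∏ i : Fin (2 * N), ∏ j : Fin (2 * N),
          if i < j then (s i - s j) / (s i + s j) else 1 := by
  simpa only [prodAboveDiag, schurMatrix, Ring.inverse_eq_inv', ← div_eq_mul_inv, of_apply] using
    pf_schurMatrix (even_two_mul N) s fun i j => (hs i j).isUnit
end

section
/- (Wronski-type derivative formula for Pfaffians) Suppose Pfaffian entries f(i,j)(x) are smooth functions of x, skew-symmetric in i,j, satisfying d/dx f(i,j) = f(i+1,j) + f(i,j+1). Then for any indices i_1 < i_2 < ⋯ < i_{2N}, d/dx Pf(i_1,...,i_{2N}) = Σ_{k=1}^{2N} Pf(i_1,...,i_k + 1,...,i_{2N}). -/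
open Matrix

/-!
Expand `Pf(i₁,…,i_{2N})` along the first row into terms `± f(i₁,i_j) · Pf(minor)` and apply the
product rule. By hypothesis the derivative of `f(i₁,i_j)` shifts `i₁` or `i_j`, and by induction
on the size the derivative of the minor shifts each of its indices in turn. Grouped by the
shifted index, these are exactly the first-row expansions of the Pfaffians on the right.
-/

section PfaffianIndexed

variable {α β 𝔸 : Type*}

def pfAt [CommRing 𝔸] (f : α → α → β → 𝔸) {n : ℕ} (g : Fin n → α) (t : β) : 𝔸 :=
  pf n (Matrix.of fun a b => f (g a) (g b) t)

lemma pfAt_succ_succ [CommRing 𝔸] (f : α → α → β → 𝔸) {n : ℕ}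
    (g : Fin (n + 2) → α) (t : β) :
    pfAt f g t = ∑ j : Fin (n + 1),
      (-1 : 𝔸) ^ (j : ℕ) * f (g 0) (g j.succ) t * pfAt f (g ∘ Fin.succ ∘ j.succAbove) t := by
  rw [pfAt, pf]; rfl

lemma succ_comp_succAbove_injective {n : ℕ} (j : Fin (n + 1)) :
    Function.Injective (Fin.succ ∘ j.succAbove : Fin n → Fin (n + 2)) :=
  (Fin.succ_injective _).comp Fin.succAbove_right_injective

/-- Shifting `g 0` or `g j.succ` changes only the entry of the `j`-th term of the first-row
expansion, shifting any other index changes only its minor. -/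
lemma sum_pfAt_update_succ_succ [CommRing 𝔸] (f : α → α → β → 𝔸) (σ : α → α)
    {n : ℕ} (g : Fin (n + 2) → α) (t : β) :
    ∑ k, pfAt f (Function.update g k (σ (g k))) t = ∑ j : Fin (n + 1),
      ((-1 : 𝔸) ^ (j : ℕ) * (f (σ (g 0)) (g j.succ) t + f (g 0) (σ (g j.succ)) t) *
          pfAt f (g ∘ Fin.succ ∘ j.succAbove) t +
        (-1 : 𝔸) ^ (j : ℕ) * f (g 0) (g j.succ) t *
          ∑ m, pfAt f (Function.update (g ∘ Fin.succ ∘ j.succAbove) m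
            (σ (g (j.succAbove m).succ))) t) := by
  simp only [pfAt_succ_succ]
  rw [Finset.sum_comm]
  refine Finset.sum_congr rfl fun j _ => ?_
  have zero_notMem : ∀ a : Fin n, (Fin.succ ∘ j.succAbove) a ≠ 0 := fun a => Fin.succ_ne_zero _
  have succ_notMem : ∀ a : Fin n, (Fin.succ ∘ j.succAbove) a ≠ j.succ :=
    fun a h => Fin.succAbove_ne j a (Fin.succ_injective _ h)
  rw [Fin.sum_univ_succ, Fin.sum_univ_succAbove _ j]
  simp only [Function.update_self, Function.update_of_ne (Fin.succ_ne_zero _),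
    Function.update_of_ne (Fin.succ_ne_zero _).symm,
    Function.update_comp_eq_of_forall_ne _ _ zero_notMem,
    Function.update_comp_eq_of_forall_ne _ _ succ_notMem]
  have minor_update : ∀ m : Fin n, Function.update g (j.succAbove m).succ
      (σ (g (j.succAbove m).succ)) ∘ Fin.succ ∘ j.succAbove =
      Function.update (g ∘ Fin.succ ∘ j.succAbove) m (σ (g (j.succAbove m).succ)) :=
    fun m => Function.update_comp_eq_of_injective g (succ_comp_succAbove_injective j) m _
  have entry_update : ∀ m : Fin n,
      Function.update g (j.succAbove m).succ (σ (g (j.succAbove m).succ)) 0 = g 0 ∧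
      Function.update g (j.succAbove m).succ (σ (g (j.succAbove m).succ)) j.succ = g j.succ :=
    fun m => ⟨Function.update_of_ne (zero_notMem m).symm _ _,
      Function.update_of_ne (succ_notMem m).symm _ _⟩
  simp only [minor_update, entry_update, Finset.mul_sum]
  ring

theorem hasDerivAt_pfAt {𝕜 : Type*} [NontriviallyNormedField 𝕜] [NormedCommRing 𝔸]
    [NormedAlgebra 𝕜 𝔸] (f : α → α → 𝕜 → 𝔸) (σ : α → α)
    (hder : ∀ i j x, HasDerivAt (f i j) (f (σ i) j x + f i (σ j) x) x) (x : 𝕜) :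
    ∀ {n : ℕ} (g : Fin n → α),
      HasDerivAt (pfAt f g) (∑ k, pfAt f (Function.update g k (σ (g k))) x) x
  | 0, _ => (hasDerivAt_const x (1 : 𝔸)).congr_deriv (by simp)
  | 1, _ => (hasDerivAt_const x (0 : 𝔸)).congr_deriv (by simp [pfAt, pf])
  | n + 2, g => by
    rw [sum_pfAt_update_succ_succ, funext (pfAt_succ_succ f g)]
    refine HasDerivAt.fun_sum fun j _ => ?_
    exact ((hder _ _ x).const_mul _).mul (hasDerivAt_pfAt f σ hder x _)

end PfaffianIndexed

theorem pf_wronski_derivative_general (N : ℕ) (f : ℕ → ℕ → ℝ → ℝ)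
    (hder : ∀ i j x, HasDerivAt (f i j) (f (i + 1) j x + f i (j + 1) x) x)
    (idx : Fin (2 * N) → ℕ) (x : ℝ) :
    HasDerivAt (fun t => pf (2 * N) (Matrix.of fun k l => f (idx k) (idx l) t))
      (∑ k : Fin (2 * N),
        pf (2 * N) (Matrix.of fun a b =>
          f (Function.update idx k (idx k + 1) a)
            (Function.update idx k (idx k + 1) b) x)) x :=
  hasDerivAt_pfAt f (· + 1) hder x idx

/-- Wronski-type derivative formula for Pfaffians: if the skew
entries satisfy `d/dx f(i,j) = f(i+1,j) + f(i,j+1)`, then for indices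
`i₁ < i₂ < ⋯ < i_{2N}`,
`d/dx Pf(i₁,…,i_{2N}) = Σₖ Pf(i₁,…,iₖ+1,…,i_{2N})`. -/
theorem pf_wronski_derivative (N : ℕ) (f : ℕ → ℕ → ℝ → ℝ)
    (hskew : ∀ i j x, f i j x = - f j i x)
    (hder : ∀ i j x, HasDerivAt (f i j) (f (i + 1) j x + f i (j + 1) x) x)
    (idx : Fin (2 * N) → ℕ) (hmono : StrictMono idx) (x : ℝ) :
    HasDerivAt (fun t => pf (2 * N) (Matrix.of fun k l => f (idx k) (idx l) t))
      (∑ k : Fin (2 * N),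
        pf (2 * N) (Matrix.of fun a b =>
          f (Function.update idx k (idx k + 1) a)
            (Function.update idx k (idx k + 1) b) x)) x :=
  pf_wronski_derivative_general N f hder idx x
end

section
/- (Pfaffian bilinear identity) For skew-symmetric Pfaffian entries on indices {a_1,a_2,a_3,a_4} ∪ {1,...,2N}: Pf(a_1,a_2,a_3,a_4,1,...,2N)·Pf(1,...,2N) = Pf(a_1,a_2,1,...,2N)·Pf(a_3,a_4,1,...,2N) - Pf(a_1,a_3,1,...,2N)·Pf(a_2,a_4,1,...,2N) + Pf(a_1,a_4,1,...,2N)·Pf(a_2,a_3,1,...,2N). -/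
open Matrix

/-- The Pfaffian of the skew-symmetric matrix whose `(k,l)` entry is
`P (v k) (v l)` for a list of indices `v`. -/
def pfIdx {R : Type*} [CommRing R] {ι : Type*} (P : ι → ι → R) {m : ℕ}
    (v : Fin m → ι) : R :=
  pf m (Matrix.of fun k l => P (v k) (v l))

/-!
Expanding `Pf(s, τ)` and `Pf(t, σ)` along their first index and exchanging the two summations
gives, for skew-symmetric `P` and any tuples `τ`, `σ`,
`∑ᵢ (-1)ⁱ Pf(σᵢ, τ) Pf(σ \ σᵢ) = - ∑ⱼ (-1)ʲ Pf(τ \ τⱼ) Pf(τⱼ, σ)`.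
For `τ = (a₁, idx)` and `σ = (a₂, a₃, a₄, idx)` the terms with `σᵢ ∈ {a₂, a₃, a₄}` and `τⱼ = a₁`
are the bilinear identity, after one transposition in each `Pf(aₖ, a₁, idx)`. In every other
term an entry `b` of `idx` occurs twice; since `Pf` is alternating, both terms of the pair
belonging to `b` equal `± P b b` times the same product, and they cancel because `2 P b b = 0`
(`P b b` itself need not vanish in characteristic `2`).

That `Pf` is alternating follows from the expansion: expanding twice, the alternating double
sum over ordered pairs of removed positions cancels in pairs, which gives the transposition
of the first two indices and the rotation `Pf(v, x) = (-1)ⁿ Pf(x, v)`; conjugating by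
rotations then yields all adjacent transpositions.
-/

open Finset Fin Equiv

-- `(i, k) ↦ (i.succAbove k, k.predAbove i)` is a sign-reversing involution without fixed points.
theorem Fin.sum_sum_neg_one_pow_mul_eq_zero {R : Type*} [Ring R] {n : ℕ}
    (G : Fin (n + 1) → Fin n → R) (hG : ∀ i k, G (i.succAbove k) (k.predAbove i) = G i k) :
    ∑ i : Fin (n + 1), ∑ k : Fin n, (-1 : R) ^ ((i : ℕ) + k) * G i k = 0 := by
  rw [← Finset.sum_product']
  refine Finset.sum_involution (fun p _ ↦ (p.1.succAbove p.2, p.2.predAbove p.1)) ?_ ?_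
    (fun _ _ ↦ mem_univ _) ?_
  · rintro ⟨i, k⟩ -
    simp only [neg_one_pow_succAbove_add_predAbove, hG]
    noncomm_ring
  · rintro ⟨i, k⟩ - - h
    exact succAbove_ne i k (congrArg Prod.fst h)
  · rintro ⟨i, k⟩ -
    simp [succAbove_succAbove_predAbove, predAbove_predAbove_succAbove]

theorem Fin.removeNth_succ_cons {α : Type*} {n : ℕ} (x : α) (v : Fin (n + 1) → α)
    (i : Fin (n + 1)) :
    i.succ.removeNth (cons x v : Fin (n + 2) → α) = cons x (i.removeNth v) := by
  ext j
  cases j using Fin.cases <;> simp [removeNth_apply]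

theorem Fin.removeNth_castSucc_snoc {α : Type*} {n : ℕ} (v : Fin (n + 1) → α) (x : α)
    (i : Fin (n + 1)) :
    i.castSucc.removeNth (snoc v x : Fin (n + 2) → α) = snoc (i.removeNth v) x := by
  ext j
  cases j using Fin.lastCases <;> simp [removeNth_apply, (castSucc_lt_last i).ne]

section Pfaffian

variable {R : Type*} [CommRing R] {ι : Type*} (P : ι → ι → R)

theorem pfIdx_zero (v : Fin 0 → ι) : pfIdx P v = 1 := rfl

theorem pfIdx_one (v : Fin 1 → ι) : pfIdx P v = 0 := rfl

theorem pfIdx_two (v : Fin 2 → ι) : pfIdx P v = P (v 0) (v 1) := by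
  simp [pfIdx, pf]

theorem pfIdx_cons {n : ℕ} (x : ι) (v : Fin (n + 1) → ι) :
    pfIdx P (cons x v : Fin (n + 2) → ι) =
      ∑ j : Fin (n + 1), (-1) ^ (j : ℕ) * P x (v j) * pfIdx P (j.removeNth v) := rfl

theorem pfIdx_congr_ofFn {m n : ℕ} {u : Fin m → ι} {v : Fin n → ι}
    (h : List.ofFn u = List.ofFn v) : pfIdx P u = pfIdx P v := by
  rw [List.ofFn_inj'] at h
  cases h
  rfl

theorem sum_pfIdx_cons_removeNth_eq_sum_sum {n : ℕ} (x y : ι) (v : Fin (n + 2) → ι) :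
    ∑ j : Fin (n + 2), (-1) ^ (j : ℕ) * P x (v j) *
        pfIdx P (cons y (j.removeNth v) : Fin (n + 2) → ι) =
      ∑ j : Fin (n + 2), ∑ k : Fin (n + 1), (-1) ^ ((j : ℕ) + k) *
        (P x (v j) * P y (v (j.succAbove k)) * pfIdx P (k.removeNth (j.removeNth v))) := by
  simp only [pfIdx_cons, mul_sum, pow_add]
  refine sum_congr rfl fun j _ ↦ sum_congr rfl fun k _ ↦ ?_
  simp only [removeNth_apply]
  ring

theorem sum_sum_pfIdx_removeNth_removeNth_eq_zero {n : ℕ} (c : ι → ι → R)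
    (hc : ∀ a b, c a b = c b a) (v : Fin (n + 2) → ι) :
    ∑ j : Fin (n + 2), ∑ k : Fin (n + 1), (-1) ^ ((j : ℕ) + k) *
      (c (v j) (v (j.succAbove k)) * pfIdx P (k.removeNth (j.removeNth v))) = 0 :=
  Fin.sum_sum_neg_one_pow_mul_eq_zero _ fun j k ↦ by
    rw [succAbove_succAbove_predAbove, ← removeNth_removeNth_eq_swap, hc]

theorem sum_pfIdx_cons_removeNth_antisymm {n : ℕ} (x y : ι) (v : Fin (n + 1) → ι) :
    ∑ j : Fin (n + 1), (-1) ^ (j : ℕ) * P x (v j) *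
        pfIdx P (cons y (j.removeNth v) : Fin (n + 1) → ι) =
      -∑ j : Fin (n + 1), (-1) ^ (j : ℕ) * P y (v j) *
        pfIdx P (cons x (j.removeNth v) : Fin (n + 1) → ι) := by
  cases n with
  | zero => simp [pfIdx_one]
  | succ n =>
    rw [eq_neg_iff_add_eq_zero, sum_pfIdx_cons_removeNth_eq_sum_sum,
      sum_pfIdx_cons_removeNth_eq_sum_sum, ← sum_add_distrib,
      ← sum_sum_pfIdx_removeNth_removeNth_eq_zero P (fun a b ↦ P x a * P y b + P y a * P x b)
        (fun a b ↦ by ring) v]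
    refine sum_congr rfl fun j _ ↦ ?_
    rw [← sum_add_distrib]
    refine sum_congr rfl fun k _ ↦ ?_
    ring

theorem sum_pfIdx_cons_removeNth_self {n : ℕ} (x : ι) (v : Fin (n + 1) → ι) :
    ∑ j : Fin (n + 1), (-1) ^ (j : ℕ) * P x (v j) *
      pfIdx P (cons x (j.removeNth v) : Fin (n + 1) → ι) = 0 := by
  cases n with
  | zero => simp [pfIdx_one]
  | succ n =>
    rw [sum_pfIdx_cons_removeNth_eq_sum_sum]
    exact sum_sum_pfIdx_removeNth_removeNth_eq_zero P (fun a b ↦ P x a * P x b)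
      (fun a b ↦ mul_comm _ _) v

theorem pfIdx_cons_cons {n : ℕ} (x y : ι) (w : Fin (n + 1) → ι) :
    pfIdx P (cons x (cons y w : Fin (n + 2) → ι) : Fin (n + 3) → ι) =
      P x y * pfIdx P w - ∑ j : Fin (n + 1), (-1) ^ (j : ℕ) * P x (w j) *
        pfIdx P (cons y (j.removeNth w) : Fin (n + 1) → ι) := by
  rw [pfIdx_cons, Fin.sum_univ_succ]
  simp only [cons_zero, cons_succ, removeNth_zero, Fin.tail_cons, removeNth_succ_cons, val_zero,
    val_succ, pow_zero, one_mul, pow_succ, sub_eq_add_neg, ← sum_neg_distrib]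
  congr 1
  refine sum_congr rfl fun j _ ↦ ?_
  ring

theorem pfIdx_cons_cons_swap (hP : ∀ x y, P x y = -P y x) {n : ℕ} (x y : ι) (w : Fin n → ι) :
    pfIdx P (cons x (cons y w : Fin (n + 1) → ι) : Fin (n + 2) → ι) =
      -pfIdx P (cons y (cons x w : Fin (n + 1) → ι) : Fin (n + 2) → ι) := by
  cases n with
  | zero => simp [pfIdx_two, hP x y]
  | succ n =>
    rw [pfIdx_cons_cons, pfIdx_cons_cons, sum_pfIdx_cons_removeNth_antisymm P x y, hP x y]
    ring

theorem pfIdx_cons_cons_self {n : ℕ} (x : ι) (w : Fin n → ι) :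
    pfIdx P (cons x (cons x w : Fin (n + 1) → ι) : Fin (n + 2) → ι) = P x x * pfIdx P w := by
  cases n with
  | zero => simp [pfIdx_two, pfIdx_zero]
  | succ n => rw [pfIdx_cons_cons, sum_pfIdx_cons_removeNth_self, sub_zero]

theorem pfIdx_snoc (hP : ∀ x y, P x y = -P y x) {n : ℕ} (v : Fin n → ι) (x : ι) :
    pfIdx P (snoc v x : Fin (n + 1) → ι) = (-1) ^ n * pfIdx P (cons x v : Fin (n + 1) → ι) := by
  induction n using Nat.strong_induction_on with
  | _ n ih =>
  match n, v with
  | 0, v => simp [pfIdx_one]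
  | 1, v => simp [pfIdx_two, Fin.snoc, hP (v 0) x]
  | m + 2, v =>
    obtain ⟨a, v, rfl⟩ : ∃ a v', v = (cons a v' : Fin (m + 2) → ι) :=
      ⟨v 0, tail v, (cons_self_tail v).symm⟩
    have hrec : ∀ j : Fin (m + 1), pfIdx P (snoc (j.removeNth v) x : Fin (m + 1) → ι) =
        (-1) ^ m * pfIdx P (cons x (j.removeNth v) : Fin (m + 1) → ι) :=
      fun j ↦ ih m (by omega) _
    rw [← cons_snoc_eq_snoc_cons, pfIdx_cons, Fin.sum_univ_castSucc]
    simp only [snoc_castSucc, snoc_last, removeNth_castSucc_snoc, removeNth_last, init_snoc,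
      val_last, hrec]
    rw [pfIdx_cons_cons, sum_pfIdx_cons_removeNth_antisymm P x a, hP a x]
    simp only [val_castSucc, mul_left_comm _ ((-1 : R) ^ m) (pfIdx _ _), ← mul_sum]
    ring

theorem pfIdx_comp_finRotate (hP : ∀ x y, P x y = -P y x) {n : ℕ} (u : Fin (n + 1) → ι) :
    pfIdx P (u ∘ finRotate (n + 1)) = (-1) ^ n * pfIdx P u := by
  have hu : u ∘ finRotate (n + 1) = snoc (tail u) (u 0) := by
    rw [snoc_eq_cons_rotate, cons_self_tail]
    rfl
  rw [hu, pfIdx_snoc P hP, cons_self_tail]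

theorem pfIdx_comp_swap_zero_one (hP : ∀ x y, P x y = -P y x) {n : ℕ} (u : Fin (n + 2) → ι) :
    pfIdx P (u ∘ swap 0 1) = -pfIdx P u := by
  obtain ⟨a, u, rfl⟩ : ∃ a u', u = (cons a u' : Fin (n + 2) → ι) :=
    ⟨_, _, (cons_self_tail u).symm⟩
  obtain ⟨b, w, rfl⟩ : ∃ b w, u = (cons b w : Fin (n + 1) → ι) :=
    ⟨_, _, (cons_self_tail u).symm⟩
  have hswap : (cons a (cons b w : Fin (n + 1) → ι) : Fin (n + 2) → ι) ∘ swap 0 1 =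
      cons b (cons a w : Fin (n + 1) → ι) := by
    ext i
    cases i using Fin.cases with
    | zero => simp
    | succ i =>
      cases i using Fin.cases with
      | zero => simp
      | succ i => simp [swap_apply_of_ne_of_ne (succ_ne_zero _) (succ_succ_ne_one _)]
  rw [hswap, pfIdx_cons_cons_swap P hP]

theorem pfIdx_comp_swap_castSucc_succ (hP : ∀ x y, P x y = -P y x) {n : ℕ}
    (u : Fin (n + 2) → ι) (i : Fin (n + 1)) :
    pfIdx P (u ∘ swap i.castSucc i.succ) = -pfIdx P u := by
  induction i using Fin.induction generalizing u with
  | zero => exact pfIdx_comp_swap_zero_one P hP u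
  | succ i ih =>
    set ρ := finRotate (n + 2)
    set s := swap i.castSucc.castSucc i.castSucc.succ
    have hconj : swap i.succ.castSucc i.succ.succ = ρ * s * ρ⁻¹ := by
      have h₁ : ρ i.castSucc.castSucc = i.succ.castSucc := by
        ext
        simp [ρ]
      have h₂ : ρ i.castSucc.succ = i.succ.succ := by
        rw [finRotate_apply]
        ext
        rw [val_add_one_of_lt (by simp [Fin.lt_def])]
        simp
      rw [← h₁, ← h₂, swap_apply_apply]
    have hw : (u ∘ ⇑(ρ * s * ρ⁻¹)) ∘ ρ = (u ∘ ρ) ∘ s := by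
      ext
      simp
    have key := pfIdx_comp_finRotate P hP (u ∘ ⇑(ρ * s * ρ⁻¹))
    rw [hw, ih, pfIdx_comp_finRotate P hP u] at key
    have hsq : ((-1 : R) ^ (n + 1)) ^ 2 = 1 := by
      rw [← pow_mul, pow_mul', neg_one_sq, one_pow]
    rw [hconj]
    linear_combination (-(-1 : R) ^ (n + 1)) * key -
      (pfIdx P u + pfIdx P (u ∘ ⇑(ρ * s * ρ⁻¹))) * hsq

theorem pfIdx_comp_perm (hP : ∀ x y, P x y = -P y x) {n : ℕ} (u : Fin n → ι)
    (σ : Perm (Fin n)) : pfIdx P (u ∘ σ) = (Perm.sign σ : ℤ) * pfIdx P u := by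
  match n with
  | 0 | 1 => simp [Subsingleton.elim σ 1]
  | n + 2 =>
    have hσ : σ ∈ Submonoid.closure (Set.range fun i : Fin (n + 1) ↦ swap i.castSucc i.succ) := by
      rw [Perm.mclosure_swap_castSucc_succ]
      exact Submonoid.mem_top σ
    induction hσ using Submonoid.closure_induction generalizing u with
    | mem τ hτ =>
      obtain ⟨i, rfl⟩ := hτ
      rw [pfIdx_comp_swap_castSucc_succ P hP, Perm.sign_swap castSucc_lt_succ.ne]
      simp
    | one => simp
    | mul σ τ _ _ hσ hτ =>
      rw [Perm.coe_mul, ← Function.comp_assoc, hτ, hσ, Perm.sign_mul]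
      push_cast
      ring

theorem pfIdx_cons_removeNth (hP : ∀ x y, P x y = -P y x) {n : ℕ} (v : Fin (n + 1) → ι)
    (m : Fin (n + 1)) :
    pfIdx P (cons (v m) (m.removeNth v) : Fin (n + 1) → ι) = (-1) ^ (m : ℕ) * pfIdx P v := by
  rw [cons_removeNth_eq_comp_cycleRange_symm, pfIdx_comp_perm P hP, Perm.sign_symm,
    sign_cycleRange]
  push_cast
  ring

-- The sign `(-1) ^ (m + 1)` of moving the second copy of `w m` to the front is absorbed by
-- `P (w m) (w m) = -P (w m) (w m)`.
theorem pfIdx_cons_apply_self (hP : ∀ x y, P x y = -P y x) {n : ℕ} (w : Fin (n + 1) → ι)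
    (m : Fin (n + 1)) :
    pfIdx P (cons (w m) w : Fin (n + 2) → ι) = P (w m) (w m) * pfIdx P (m.removeNth w) := by
  have h := pfIdx_cons_removeNth P hP (cons (w m) w : Fin (n + 2) → ι) m.succ
  rw [cons_succ, removeNth_succ_cons, pfIdx_cons_cons_self, val_succ] at h
  rcases neg_one_pow_eq_or R ((m : ℕ) + 1) with hm | hm <;> rw [hm] at h
  · linear_combination -h
  · linear_combination h - pfIdx P (m.removeNth w) * hP (w m) (w m)

theorem sum_pfIdx_cons_mul_pfIdx_removeNth (hP : ∀ x y, P x y = -P y x) {p q : ℕ}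
    (τ : Fin (p + 1) → ι) (σ : Fin (q + 1) → ι) :
    ∑ i : Fin (q + 1), (-1) ^ (i : ℕ) * pfIdx P (cons (σ i) τ : Fin (p + 2) → ι) *
        pfIdx P (i.removeNth σ) =
      -∑ j : Fin (p + 1), (-1) ^ (j : ℕ) * pfIdx P (j.removeNth τ) *
        pfIdx P (cons (τ j) σ : Fin (q + 2) → ι) := by
  simp only [pfIdx_cons, sum_mul, mul_sum, ← sum_neg_distrib]
  rw [sum_comm]
  refine sum_congr rfl fun i _ ↦ sum_congr rfl fun j _ ↦ ?_
  rw [hP]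
  ring

theorem pfIdx_cons_bilinear (hP : ∀ x y, P x y = -P y x) {n : ℕ} (a₁ a₂ a₃ a₄ : ι)
    (β : Fin n → ι) :
    pfIdx P (cons a₁ (cons a₂ (cons a₃ (cons a₄ β : Fin (n + 1) → ι) : Fin (n + 2) → ι) :
        Fin (n + 3) → ι) : Fin (n + 4) → ι) * pfIdx P β =
      pfIdx P (cons a₁ (cons a₂ β : Fin (n + 1) → ι) : Fin (n + 2) → ι) *
          pfIdx P (cons a₃ (cons a₄ β : Fin (n + 1) → ι) : Fin (n + 2) → ι) -
        pfIdx P (cons a₁ (cons a₃ β : Fin (n + 1) → ι) : Fin (n + 2) → ι) *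
          pfIdx P (cons a₂ (cons a₄ β : Fin (n + 1) → ι) : Fin (n + 2) → ι) +
        pfIdx P (cons a₁ (cons a₄ β : Fin (n + 1) → ι) : Fin (n + 2) → ι) *
          pfIdx P (cons a₂ (cons a₃ β : Fin (n + 1) → ι) : Fin (n + 2) → ι) := by
  set τ : Fin (n + 1) → ι := cons a₁ β
  set σ : Fin (n + 3) → ι := cons a₂ (cons a₃ (cons a₄ β : Fin (n + 1) → ι) : Fin (n + 2) → ι)
  have h := sum_pfIdx_cons_mul_pfIdx_removeNth P hP τ σ
  have hdup : ∀ k : Fin n,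
      (-1) ^ (k.succ.succ.succ : ℕ) * pfIdx P (cons (σ k.succ.succ.succ) τ : Fin (n + 2) → ι) *
          pfIdx P (k.succ.succ.succ.removeNth σ) =
        -((-1) ^ (k.succ : ℕ) * pfIdx P (k.succ.removeNth τ) *
          pfIdx P (cons (τ k.succ) σ : Fin (n + 4) → ι)) := by
    intro k
    have hτ : pfIdx P (cons (σ k.succ.succ.succ) τ : Fin (n + 2) → ι) =
        P (β k) (β k) * pfIdx P (k.succ.removeNth τ) := pfIdx_cons_apply_self P hP τ k.succ
    have hσ : pfIdx P (cons (τ k.succ) σ : Fin (n + 4) → ι) =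
        P (β k) (β k) * pfIdx P (k.succ.succ.succ.removeNth σ) :=
      pfIdx_cons_apply_self P hP σ k.succ.succ.succ
    rw [hτ, hσ]
    simp only [val_succ, pow_succ]
    linear_combination -(-1) ^ (k : ℕ) * pfIdx P (k.succ.removeNth τ) *
      pfIdx P (k.succ.succ.succ.removeNth σ) * hP (β k) (β k)
  rw [Fin.sum_univ_succ, Fin.sum_univ_succ, Fin.sum_univ_succ, sum_congr rfl fun k _ ↦ hdup k,
    sum_neg_distrib, Fin.sum_univ_succ (n := n)] at h
  simp only [τ, σ, removeNth_zero, Fin.tail_cons, removeNth_succ_cons, cons_zero, cons_succ,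
    val_zero, val_succ] at h
  rw [pfIdx_cons_cons_swap P hP a₂ a₁, pfIdx_cons_cons_swap P hP a₃ a₁,
    pfIdx_cons_cons_swap P hP a₄ a₁] at h
  linear_combination h

end Pfaffian

/-- Pfaffian bilinear identity:
`Pf(a₁,a₂,a₃,a₄,1,…,2N)·Pf(1,…,2N) = Pf(a₁,a₂,1,…,2N)·Pf(a₃,a₄,1,…,2N)
 - Pf(a₁,a₃,1,…,2N)·Pf(a₂,a₄,1,…,2N) + Pf(a₁,a₄,1,…,2N)·Pf(a₂,a₃,1,…,2N)`. -/
theorem pf_bilinear_identity {R : Type*} [CommRing R] {ι : Type*} (N : ℕ)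
    (P : ι → ι → R) (hP : ∀ x y, P x y = - P y x)
    (a1 a2 a3 a4 : ι) (idx : Fin (2 * N) → ι) :
    pfIdx P (Fin.append ![a1, a2, a3, a4] idx) * pfIdx P idx
      = pfIdx P (Fin.append ![a1, a2] idx) * pfIdx P (Fin.append ![a3, a4] idx)
        - pfIdx P (Fin.append ![a1, a3] idx) * pfIdx P (Fin.append ![a2, a4] idx)
        + pfIdx P (Fin.append ![a1, a4] idx) * pfIdx P (Fin.append ![a2, a3] idx) := by
  have h₄ : pfIdx P (Fin.append ![a1, a2, a3, a4] idx) =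
      pfIdx P (cons a1 (cons a2 (cons a3 (cons a4 idx : Fin (2 * N + 1) → ι) :
        Fin (2 * N + 2) → ι) : Fin (2 * N + 3) → ι) : Fin (2 * N + 4) → ι) :=
    pfIdx_congr_ofFn P (by simp [List.ofFn_fin_append])
  have h₂ : ∀ a b, pfIdx P (Fin.append ![a, b] idx) =
      pfIdx P (cons a (cons b idx : Fin (2 * N + 1) → ι) : Fin (2 * N + 2) → ι) :=
    fun a b ↦ pfIdx_congr_ofFn P (by simp [List.ofFn_fin_append])
  rw [h₄, h₂, h₂, h₂, h₂, h₂, h₂]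
  exact pfIdx_cons_bilinear P hP a1 a2 a3 a4 idx
end

section
/- For variables x_1,...,x_n and 0 ≤ k ≤ n, the determinant of the n×n matrix whose rows are (1, x_i, ..., x_i^{n-k-1}, x_i^{n-k+1}, ..., x_i^n) (i.e., the Vandermonde-type matrix with column of powers n-k omitted) equals e_k(x_1,...,x_n) · ∏_{1 ≤ i < j ≤ n} (x_j - x_i), where e_k is the k-th elementary symmetric polynomial. -/
open Matrix Polynomial

lemma prod_Ioi_eq_prod_ite {R : Type*} [CommRing R] {n : ℕ} (f : Fin n → Fin n → R) :
    (∏ i : Fin n, ∏ j ∈ Finset.Ioi i, f i j)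
      = ∏ i : Fin n, ∏ j : Fin n, if i < j then f i j else 1 := by
  refine Finset.prod_congr rfl fun i _ => ?_
  rw [← Finset.prod_filter]
  congr 1
  ext j
  simp

/-- the determinant of the Vandermonde-type matrix with the column
of powers `n - k` omitted equals `e_k(x₁,…,xₙ) · ∏_{i<j} (xⱼ - xᵢ)`, where `e_k`
is the `k`-th elementary symmetric polynomial. -/
theorem det_vandermonde_omit_col {R : Type*} [CommRing R] (n k : ℕ) (hk : k ≤ n)
    (x : Fin n → R) :
    (Matrix.of fun i m : Fin n =>
        x i ^ (if (m : ℕ) < n - k then (m : ℕ) else (m : ℕ) + 1)).det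
      = (∑ S ∈ Finset.powersetCard k (Finset.univ : Finset (Fin n)), ∏ i ∈ S, x i) *
        ∏ i : Fin n, ∏ j : Fin n, if i < j then x j - x i else 1 := by
  classical
  set v : Fin (n + 1) → R[X] := Fin.snoc (fun i => C (x i)) X with hv
  set e : R := ∑ S ∈ Finset.powersetCard k (Finset.univ : Finset (Fin n)), ∏ i ∈ S, x i
  set V : R := ∏ i : Fin n, ∏ j : Fin n, if i < j then x j - x i else 1 with hV
  set j₀ : Fin (n + 1) := ⟨n - k, by omega⟩ with hj₀
  -- exponents of the target matrix come from succAbove at j₀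
  have hex : ∀ m : Fin n, ((j₀.succAbove m : ℕ))
      = if (m : ℕ) < n - k then (m : ℕ) else (m : ℕ) + 1 := by
    intro m
    rw [Fin.succAbove]
    split_ifs with h1 h2 h2
    · simp
    · exact absurd (by simpa [Fin.lt_def] using h1) h2
    · exact absurd (by simpa [Fin.lt_def] using h2) h1
    · simp
  -- Step A: product formula for the big Vandermonde determinant
  have hP : (vandermonde v).det
      = C V * ∏ i : Fin n, (X - C (x i)) := by
    rw [det_vandermonde, prod_Ioi_eq_prod_ite]
    rw [Fin.prod_univ_castSucc]
    have hlast : (∏ j : Fin (n+1), if Fin.last n < j then v j - v (Fin.last n) else 1) = 1 := by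
      apply Finset.prod_eq_one
      intro j _
      rw [if_neg (by simpa using (Fin.le_last j).not_gt)]
    rw [hlast, mul_one]
    have : ∀ i : Fin n, (∏ j : Fin (n+1),
          if i.castSucc < j then v j - v i.castSucc else 1)
        = (∏ j : Fin n, if i < j then C (x j - x i) else 1) * (X - C (x i)) := by
      intro i
      rw [Fin.prod_univ_castSucc]
      congr 1
      · refine Finset.prod_congr rfl fun j _ => ?_
        simp only [Fin.castSucc_lt_castSucc_iff, hv, Fin.snoc_castSucc, map_sub]
      · rw [if_pos (Fin.castSucc_lt_last i)]
        simp [hv, Fin.snoc_castSucc, Fin.snoc_last]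
    rw [Finset.prod_congr rfl fun i _ => this i, Finset.prod_mul_distrib]
    congr 1
    rw [hV, map_prod]
    refine Finset.prod_congr rfl fun i _ => ?_
    rw [map_prod]
    refine Finset.prod_congr rfl fun j _ => ?_
    split_ifs <;> simp
  -- Step B: Laplace expansion along the last row
  have hQ : (vandermonde v).det
      = ∑ j : Fin (n + 1), C ((-1) ^ (n + (j : ℕ)) *
          (Matrix.of fun i m : Fin n => x i ^ (j.succAbove m : ℕ)).det) * X ^ (j : ℕ) := by
    rw [det_succ_row (vandermonde v) (Fin.last n)]
    refine Finset.sum_congr rfl fun j _ => ?_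
    have h1 : vandermonde v (Fin.last n) j = X ^ (j : ℕ) := by
      simp [vandermonde_apply, hv, Fin.snoc_last]
    have h2 : ((vandermonde v).submatrix (Fin.last n).succAbove j.succAbove)
        = (C : R →+* R[X]).mapMatrix (Matrix.of fun i m : Fin n => x i ^ (j.succAbove m : ℕ)) := by
      ext i m
      simp [vandermonde_apply, Fin.succAbove_last, hv, Fin.snoc_castSucc]
    rw [h1, h2, ← RingHom.map_det]
    simp only [RingHom.coe_coe, C_mul, C_pow, C_neg, C_1, Fin.val_last]
    ring
  -- compare coefficients at n - k
  have hco := congrArg (fun p : R[X] => p.coeff (n - k)) (hQ.symm.trans hP)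
  simp only [finset_sum_coeff, coeff_C_mul_X_pow] at hco
  rw [Finset.sum_eq_single j₀] at hco
  · rw [if_pos rfl] at hco
    -- compute coeff of RHS
    have hQc : (∏ i : Fin n, (X - C (x i))).coeff (n - k) = (-1) ^ k * e := by
      have := Finset.prod_X_add_C_coeff (Finset.univ : Finset (Fin n)) (fun i => - x i)
        (k := n - k) (by simp)
      simp only [map_neg, ← sub_eq_add_neg] at this
      rw [this]
      have hcard : (Finset.univ : Finset (Fin n)).card - (n - k) = k := by simp; omega
      rw [hcard, Finset.mul_sum]
      refine Finset.sum_congr rfl fun S hS => ?_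
      calc ∏ i ∈ S, -x i = ∏ i ∈ S, (-1) * x i := by simp
        _ = (∏ _i ∈ S, (-1 : R)) * ∏ i ∈ S, x i := Finset.prod_mul_distrib
        _ = (-1) ^ k * ∏ i ∈ S, x i := by
            rw [Finset.prod_const, (Finset.mem_powersetCard.mp hS).2]
    rw [coeff_C_mul, hQc] at hco
    have hsign : ((-1 : R) ^ (n + (j₀ : ℕ))) * ((-1) ^ k) = 1 := by
      rw [← pow_add]
      have : n + (j₀ : ℕ) + k = 2 * n := by simp [hj₀]; omega
      rw [this, pow_mul]
      simp
    have hexp : (Matrix.of fun i m : Fin n => x i ^ (j₀.succAbove m : ℕ))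
        = (Matrix.of fun i m : Fin n =>
            x i ^ (if (m : ℕ) < n - k then (m : ℕ) else (m : ℕ) + 1)) := by
      ext i m
      simp only [Matrix.of_apply, hex m]
    calc (Matrix.of fun i m : Fin n =>
            x i ^ (if (m : ℕ) < n - k then (m : ℕ) else (m : ℕ) + 1)).det
        = ((-1 : R) ^ (n + (j₀ : ℕ)) * ((-1) ^ k)) *
            (Matrix.of fun i m : Fin n =>
            x i ^ (if (m : ℕ) < n - k then (m : ℕ) else (m : ℕ) + 1)).det := by
          rw [hsign, one_mul]
      _ = (-1) ^ k * ((-1 : R) ^ (n + (j₀ : ℕ)) *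
            (Matrix.of fun i m : Fin n => x i ^ (j₀.succAbove m : ℕ)).det) := by
          rw [hexp]; ring
      _ = (-1) ^ k * (V * ((-1) ^ k * e)) := by rw [hco]
      _ = ((-1) ^ k * (-1) ^ k) * (e * V) := by ring
      _ = e * V := by rw [← pow_add, ← two_mul, pow_mul]; simp
  · intro j _ hj
    rw [if_neg]
    intro h
    exact hj (Fin.ext (by simp [hj₀, ← h]))
  · intro h
    exact absurd (Finset.mem_univ j₀) h
end
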